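/- Let ρ_AB be a separable bipartite state on ℂ^{d_A} ⊗ ℂ^{d_B}, let {P^{(b_A)}_{n_A}} be a complete set of MUMs on ℂ^{d_A} with efficiency parameter κ_A and {Q^{(b_B)}_{n_B}} a complete set of MUMs on ℂ^{d_B} with efficiency parameter κ_B, and let J(ρ_AB) be the matrix with entries tr((P^{(b_A)}_{n_A} ⊗ Q^{(b_B)}_{n_B}) ρ_AB), where (n_A,b_A) indexes rows and (n_B,b_B) indexes columns. Then ‖J(ρ_AB)‖_tr ≤ √(κ_A + 1) · √(κ_B + 1). -/

import Mathlib

open scoped BigOperators ComplexOrder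
open Matrix

noncomputable def traceNorm {m n : Type*} [Fintype m] [Fintype n] [DecidableEq n]
    (X : Matrix m n ℂ) : ℝ :=
  ((Matrix.posSemidef_conjTranspose_mul_self X).1.eigenvectorUnitary.1 *
    diagonal (((↑) : ℝ → ℂ) ∘ (√·) ∘ (Matrix.posSemidef_conjTranspose_mul_self X).1.eigenvalues) *
    (star (Matrix.posSemidef_conjTranspose_mul_self X).1.eigenvectorUnitary : Matrix n n ℂ)).trace.re

def IsDensityMatrix {ι : Type*} [Fintype ι] (ρ : Matrix ι ι ℂ) : Prop :=
  ρ.PosSemidef ∧ ρ.trace = 1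

def IsNMPOVM (d N M : ℕ) (x : ℝ)
    (E : Fin N → Fin M → Matrix (Fin d) (Fin d) ℂ) : Prop :=
  (∀ α k, (E α k).PosSemidef) ∧
  (∀ α, ∑ k, E α k = 1) ∧
  (∀ α k, (E α k).trace = (((d : ℝ) / M : ℝ) : ℂ)) ∧
  (∀ α k, (E α k * E α k).trace = (x : ℂ)) ∧
  (∀ α k l, k ≠ l → (E α k * E α l).trace =
      ((((d : ℝ) - M * x) / (M * ((M : ℝ) - 1)) : ℝ) : ℂ)) ∧
  (∀ α β k l, α ≠ β → (E α k * E β l).trace = (((d : ℝ) / M ^ 2 : ℝ) : ℂ)) ∧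
  ((d : ℝ) / M ^ 2 < x ∧ x ≤ min ((d : ℝ) ^ 2 / M ^ 2) ((d : ℝ) / M))

def IsInfoComplete (d N M : ℕ) : Prop := ((M : ℝ) - 1) * N = (d : ℝ) ^ 2 - 1
open Kronecker

/-- Partial trace over the second factor. -/
noncomputable def ptraceB {dA dB : ℕ} (ρ : Matrix (Fin dA × Fin dB) (Fin dA × Fin dB) ℂ) :
    Matrix (Fin dA) (Fin dA) ℂ :=
  Matrix.of fun i j => ∑ k, ρ (i, k) (j, k)

/-- Partial trace over the first factor. -/
noncomputable def ptraceA {dA dB : ℕ} (ρ : Matrix (Fin dA × Fin dB) (Fin dA × Fin dB) ℂ) :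
    Matrix (Fin dB) (Fin dB) ℂ :=
  Matrix.of fun i j => ∑ k, ρ (k, i) (k, j)

/-- A bipartite state is separable if it is a finite convex combination of
tensor products of local density matrices. -/
def SeparableState {dA dB : ℕ} (ρ : Matrix (Fin dA × Fin dB) (Fin dA × Fin dB) ℂ) : Prop :=
  ∃ (K : ℕ) (p : Fin K → ℝ) (ρA : Fin K → Matrix (Fin dA) (Fin dA) ℂ)
    (ρB : Fin K → Matrix (Fin dB) (Fin dB) ℂ),
    (∀ i, 0 ≤ p i) ∧ (∑ i, p i = 1) ∧
    (∀ i, IsDensityMatrix (ρA i)) ∧ (∀ i, IsDensityMatrix (ρB i)) ∧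
    ρ = ∑ i, (p i : ℂ) • (ρA i ⊗ₖ ρB i)
/-- A complete set of d+1 mutually unbiased measurements (MUMs) on ℂ^d with
efficiency parameter κ. -/
def IsMUMs (d : ℕ) (κ : ℝ) (P : Fin (d + 1) → Fin d → Matrix (Fin d) (Fin d) ℂ) : Prop :=
  (∀ b n, (P b n).PosSemidef) ∧ (∀ b, ∑ n, P b n = 1) ∧
  (∀ b n, (P b n).trace = 1) ∧
  (∀ b n, (P b n * P b n).trace = (κ : ℂ)) ∧
  (∀ b n n', n ≠ n' → (P b n * P b n').trace = (((1 - κ) / ((d : ℝ) - 1) : ℝ) : ℂ)) ∧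
  (∀ b b' n n', b ≠ b' → (P b n * P b' n').trace = ((1 / (d : ℝ) : ℝ) : ℂ)) ∧
  (1 / (d : ℝ) < κ ∧ κ ≤ 1)

/-!
Write `ρ = ∑ᵢ pᵢ σᵢ ⊗ τᵢ`. Then `J(ρ) = ∑ᵢ pᵢ uᵢ wᵢᵀ`, where `uᵢ` and `wᵢ` are the vectors of
outcome probabilities `tr(P σᵢ)` and `tr(Q τᵢ)`. Pairing a singular value decomposition of `J` with
this rank-one decomposition and applying Bessel's inequality on both sides bounds `‖J‖_tr` by
`∑ᵢ pᵢ ‖uᵢ‖ ‖wᵢ‖`, so it suffices to show `‖u‖² ≤ κ + 1` for the probability vector `u` of any state.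

For that, use the Hilbert–Schmidt inner product. The traceless parts `P⁽ᵇ⁾ₙ − I/d` are orthogonal
for different `b`, and within one `b` their Gram matrix is `γ` times the identity plus a constant
matrix, where `γ = (κ d − 1)/(d − 1)`. Projecting `ρ − I/d` onto their span gives
`∑ (tr(P⁽ᵇ⁾ₙ ρ) − 1/d)² ≤ γ (tr ρ² − 1/d) ≤ γ (1 − 1/d)`, which rearranges to `‖u‖² ≤ κ + 1`.
-/

section InnerProductSpace

variable {𝕜 E F ι κ : Type*} [RCLike 𝕜] [NormedAddCommGroup E] [InnerProductSpace 𝕜 E]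
  [NormedAddCommGroup F] [InnerProductSpace 𝕜 F]

local notation "⟪" x ", " y "⟫" => inner 𝕜 x y

theorem Orthonormal.norm_sum_inner_mul_inner_le [Fintype ι] {f : ι → E} {e : ι → F}
    (hf : Orthonormal 𝕜 f) (he : Orthonormal 𝕜 e) (u : E) (v : F) :
    ‖∑ k, ⟪f k, u⟫ * ⟪v, e k⟫‖ ≤ ‖u‖ * ‖v‖ := by
  have hu := Real.sqrt_le_sqrt (hf.sum_inner_products_le u (s := Finset.univ))
  have hv := Real.sqrt_le_sqrt (he.sum_inner_products_le v (s := Finset.univ))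
  rw [Real.sqrt_sq (norm_nonneg _)] at hu hv
  calc ‖∑ k, ⟪f k, u⟫ * ⟪v, e k⟫‖
      ≤ ∑ k, ‖⟪f k, u⟫‖ * ‖⟪e k, v⟫‖ := by
        refine (norm_sum_le _ _).trans_eq (Finset.sum_congr rfl fun k _ => ?_)
        rw [norm_mul, norm_inner_symm v]
    _ ≤ √(∑ k, ‖⟪f k, u⟫‖ ^ 2) * √(∑ k, ‖⟪e k, v⟫‖ ^ 2) :=
        Real.sum_mul_le_sqrt_mul_sqrt _ _ _
    _ ≤ ‖u‖ * ‖v‖ := mul_le_mul hu hv (Real.sqrt_nonneg _) (norm_nonneg _)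

theorem orthonormal_normalize {g : ι → E} (hg : Pairwise fun j k => ⟪g j, g k⟫ = 0) :
    Orthonormal 𝕜 fun k : {k // g k ≠ 0} => (‖g k‖ : 𝕜)⁻¹ • g k := by
  refine ⟨fun k => norm_smul_inv_norm k.2, fun j k hjk => ?_⟩
  simp only [inner_smul_left, inner_smul_right, hg (Subtype.coe_ne_coe.mpr hjk), mul_zero]

theorem Orthonormal.sum_norm_apply_le [Fintype ι] [Fintype κ] {T : F →ₗ[𝕜] E} {e : ι → F}
    (he : Orthonormal 𝕜 e) (hTe : Pairwise fun j k => ⟪T (e j), T (e k)⟫ = 0)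
    (u : κ → E) (v : κ → F) (hT : ∀ z, T z = ∑ i, ⟪v i, z⟫ • u i) :
    ∑ k, ‖T (e k)‖ ≤ ∑ i, ‖u i‖ * ‖v i‖ := by
  classical
  set f := fun k : {k // T (e k) ≠ 0} => (‖T (e k)‖ : 𝕜)⁻¹ • T (e k)
  have hf : Orthonormal 𝕜 f := orthonormal_normalize hTe
  have hnorm : ∀ k : {k // T (e k) ≠ 0}, ‖T (e k)‖ = RCLike.re ⟪f k, T (e k)⟫ := by
    intro k
    rw [inner_smul_left, map_inv₀, RCLike.conj_ofReal, inner_self_eq_norm_sq_to_K, sq,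
      inv_mul_cancel_left₀ (RCLike.ofReal_ne_zero.mpr (norm_ne_zero_iff.mpr k.2)),
      RCLike.ofReal_re]
  calc ∑ k, ‖T (e k)‖ = ∑ k ∈ Finset.univ.filter (fun k => T (e k) ≠ 0), ‖T (e k)‖ :=
        (Finset.sum_filter_of_ne fun k _ h => by simpa using h).symm
    _ = ∑ k : {k // T (e k) ≠ 0}, RCLike.re ⟪f k, T (e k)⟫ :=
        (Finset.sum_subtype _ (by simp) _).trans (Finset.sum_congr rfl fun k _ => hnorm k)
    _ = RCLike.re (∑ i, ∑ k : {k // T (e k) ≠ 0}, ⟪f k, u i⟫ * ⟪v i, e k⟫) := by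
        simp only [hT, inner_sum, inner_smul_right, map_sum]
        rw [Finset.sum_comm]
        simp only [mul_comm]
    _ ≤ ∑ i, ‖∑ k : {k // T (e k) ≠ 0}, ⟪f k, u i⟫ * ⟪v i, e k⟫‖ :=
        (RCLike.re_le_norm _).trans (norm_sum_le _ _)
    _ ≤ ∑ i, ‖u i‖ * ‖v i‖ := Finset.sum_le_sum fun i _ =>
        hf.norm_sum_inner_mul_inner_le (he.comp _ Subtype.val_injective) (u i) (v i)

end InnerProductSpace

section TraceNorm

variable {m n : Type*} [Fintype m] [Fintype n] [DecidableEq n]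

theorem traceNorm_eq_sum_sqrt_eigenvalues (X : Matrix m n ℂ) :
    traceNorm X = ∑ k, √((posSemidef_conjTranspose_mul_self X).1.eigenvalues k) := by
  rw [traceNorm, trace_mul_cycle, Unitary.coe_star_mul_self, one_mul, trace_diagonal]
  simp

theorem inner_toEuclideanLin_eigenvectorBasis (X : Matrix m n ℂ) (hX : (Xᴴ * X).IsHermitian)
    (j k : n) :
    inner ℂ (toEuclideanLin X (hX.eigenvectorBasis j)) (toEuclideanLin X (hX.eigenvectorBasis k)) =
      hX.eigenvalues k * inner ℂ (hX.eigenvectorBasis j) (hX.eigenvectorBasis k) := by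
  classical
  rw [← LinearMap.adjoint_inner_right, ← toEuclideanLin_conjTranspose_eq_adjoint,
    ← inner_smul_right]
  congr 1
  ext1
  simp only [toLpLin_apply, mulVec_mulVec, hX.mulVec_eigenvectorBasis, WithLp.ofLp_smul,
    RCLike.real_smul_eq_coe_smul (K := ℂ)]
  rfl

theorem traceNorm_sum_vecMulVec_le {ι : Type*} [Fintype ι] (u : ι → m → ℂ) (w : ι → n → ℂ) :
    traceNorm (∑ i, vecMulVec (u i) (w i)) ≤
      ∑ i, ‖WithLp.toLp 2 (u i)‖ * ‖WithLp.toLp 2 (w i)‖ := by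
  set X := ∑ i, vecMulVec (u i) (w i)
  set hX := (posSemidef_conjTranspose_mul_self X).1
  set B := hX.eigenvectorBasis
  have hsqrt : ∀ k, √(hX.eigenvalues k) = ‖toEuclideanLin X (B k)‖ := by
    intro k
    have h := inner_toEuclideanLin_eigenvectorBasis X hX k k
    rw [inner_self_eq_norm_sq_to_K, inner_self_eq_norm_sq_to_K, B.orthonormal.1 k,
      RCLike.ofReal_one, one_pow, mul_one] at h
    rw [← Real.sqrt_sq (norm_nonneg _)]
    congr 1
    exact RCLike.ofReal_injective (K := ℂ) (by rw [RCLike.ofReal_pow]; exact h.symm)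
  have hT : ∀ z, toEuclideanLin X z =
      ∑ i, inner ℂ (WithLp.toLp 2 (star (w i))) z • WithLp.toLp 2 (u i) := by
    intro z
    ext1
    simp [X, vecMulVec_mulVec, EuclideanSpace.inner_eq_star_dotProduct, dotProduct_comm]
  have horth : Pairwise fun j k => inner ℂ (toEuclideanLin X (B j)) (toEuclideanLin X (B k)) = 0 :=
    fun j k hjk => by
      dsimp only
      rw [inner_toEuclideanLin_eigenvectorBasis, B.orthonormal.inner_eq_zero hjk, mul_zero]
  rw [traceNorm_eq_sum_sqrt_eigenvalues]
  simp only [hsqrt]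
  refine (B.orthonormal.sum_norm_apply_le horth _ _ hT).trans_eq ?_
  simp [EuclideanSpace.norm_eq]

end TraceNorm

section HermitianTrace

variable {n : Type*} [Fintype n]

theorem Matrix.IsHermitian.trace_mul_eq_ofReal_re {A B : Matrix n n ℂ} (hA : A.IsHermitian)
    (hB : B.IsHermitian) : (A * B).trace = ((A * B).trace.re : ℂ) := by
  rw [eq_comm, ← Complex.conj_eq_iff_re, ← Complex.star_def, ← trace_conjTranspose,
    conjTranspose_mul, hA, hB, trace_mul_comm]

theorem Matrix.IsHermitian.re_trace_mul_self_nonneg {A : Matrix n n ℂ} (hA : A.IsHermitian) :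
    0 ≤ (A * A).trace.re := by
  nth_rewrite 1 [← hA]
  exact (Complex.nonneg_iff.mp (posSemidef_conjTranspose_mul_self A).trace_nonneg).1

theorem Matrix.IsHermitian.trace_mul_self [DecidableEq n] {A : Matrix n n ℂ}
    (hA : A.IsHermitian) : (A * A).trace = ∑ i, ((hA.eigenvalues i ^ 2 : ℝ) : ℂ) := by
  conv_lhs => rw [hA.spectral_theorem, ← map_mul]
  rw [Unitary.conjStarAlgAut_apply, trace_mul_cycle, Unitary.coe_star_mul_self, one_mul,
    diagonal_mul_diagonal, trace_diagonal]
  simp [sq]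

theorem IsDensityMatrix.re_trace_mul_self_le_one [DecidableEq n] {ρ : Matrix n n ℂ}
    (hρ : IsDensityMatrix ρ) : (ρ * ρ).trace.re ≤ 1 := by
  have hsum : ∑ i, hρ.1.1.eigenvalues i = 1 := by
    have h := hρ.2
    rw [hρ.1.1.trace_eq_sum_eigenvalues] at h
    simpa [Complex.re_sum] using congrArg Complex.re h
  rw [hρ.1.1.trace_mul_self, ← Complex.ofReal_sum, Complex.ofReal_re]
  exact (Finset.sum_sq_le_sq_sum_of_nonneg fun i _ => hρ.1.eigenvalues_nonneg i).trans_eq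
    (by rw [hsum, one_pow])

theorem Matrix.IsHermitian.sum_mul_re_trace_mul_le {ι : Type*} [Fintype ι]
    {Δ : Matrix n n ℂ} (hΔ : Δ.IsHermitian) {F : ι → Matrix n n ℂ} (hF : ∀ i, (F i).IsHermitian)
    (c : ι → ℝ) (h : ∀ j, ((∑ i, (c i : ℂ) • F i) * F j).trace = (Δ * F j).trace) :
    ∑ j, c j * (Δ * F j).trace.re ≤ (Δ * Δ).trace.re := by
  -- `h` says that `W` is the orthogonal projection of `Δ` onto the span of the `F i`
  set W := ∑ i, (c i : ℂ) • F i
  have hW : W.IsHermitian := by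
    simp only [W, IsHermitian, conjTranspose_sum, conjTranspose_smul, Complex.star_def,
      Complex.conj_ofReal, (hF _).eq]
  have hΔW : (Δ * W).trace = ∑ j, (c j : ℂ) * (Δ * F j).trace := by
    simp [W, Matrix.mul_sum, trace_sum]
  have hWW : (W * W).trace = (Δ * W).trace := by
    conv_lhs => rw [show W * W = ∑ j, (c j : ℂ) • (W * F j) by simp [W, Matrix.mul_sum]]
    simp only [trace_sum, trace_smul, h, hΔW, smul_eq_mul]
  have hpos := (hΔ.sub hW).re_trace_mul_self_nonneg
  have hre : (Δ * W).trace.re = ∑ j, c j * (Δ * F j).trace.re := by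
    simp [hΔW, Complex.re_sum]
  rw [sub_mul, mul_sub, mul_sub, trace_sub, trace_sub, trace_sub, trace_mul_comm W Δ, hWW] at hpos
  simp only [Complex.sub_re] at hpos
  linarith

end HermitianTrace

section TracelessPart

variable {n : Type*} [Fintype n] [DecidableEq n]

noncomputable def Matrix.tracelessPart (A : Matrix n n ℂ) : Matrix n n ℂ :=
  A - (A.trace / Fintype.card n) • 1

theorem Matrix.trace_tracelessPart_mul_tracelessPart (A B : Matrix n n ℂ) :
    (A.tracelessPart * B.tracelessPart).trace =
      (A * B).trace - A.trace * B.trace / Fintype.card n := by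
  simp only [tracelessPart, sub_mul, mul_sub, smul_mul, Matrix.mul_smul, one_mul, mul_one,
    trace_sub, trace_smul, trace_one, smul_eq_mul]
  rcases eq_or_ne (Fintype.card n : ℂ) 0 with h | h
  · simp [h]
  · field_simp
    ring

theorem Matrix.IsHermitian.tracelessPart {A : Matrix n n ℂ} (hA : A.IsHermitian) :
    A.tracelessPart.IsHermitian := by
  refine hA.sub (isHermitian_one.smul ((?_ : IsSelfAdjoint A.trace).div (.natCast _)))
  rw [IsSelfAdjoint, ← trace_conjTranspose, hA]

end TracelessPart

section MUM

theorem IsDensityMatrix.nonempty {ι : Type*} [Fintype ι] {ρ : Matrix ι ι ℂ}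
    (hρ : IsDensityMatrix ρ) : Nonempty ι := by
  by_contra h
  have : IsEmpty ι := not_nonempty_iff.mp h
  simpa [trace_eq_zero_of_isEmpty] using hρ.2

variable {d : ℕ} {κ : ℝ} {P : Fin (d + 1) → Fin d → Matrix (Fin d) (Fin d) ℂ}

theorem IsMUMs.one_lt_mul (hP : IsMUMs d κ P) (hd : 0 < d) : 1 < κ * d := by
  obtain ⟨-, -, -, -, -, -, h, -⟩ := hP
  rwa [div_lt_iff₀ (by exact_mod_cast hd)] at h

theorem IsMUMs.two_le (hP : IsMUMs d κ P) (hd : 0 < d) : 2 ≤ d := by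
  have h := hP.one_lt_mul hd
  obtain ⟨-, -, -, -, -, -, -, hκ⟩ := hP
  rcases (by omega : d = 1 ∨ 2 ≤ d) with rfl | h2
  · norm_num at h
    linarith
  · exact h2

theorem IsMUMs.sum_re_trace_mul (hP : IsMUMs d κ P) {σ : Matrix (Fin d) (Fin d) ℂ}
    (hσ : σ.trace = 1) (b : Fin (d + 1)) : ∑ n, (P b n * σ).trace.re = 1 := by
  obtain ⟨-, hsum, -⟩ := hP
  rw [← Complex.re_sum, ← trace_sum, ← Finset.sum_mul, hsum b, one_mul, hσ, Complex.one_re]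

theorem IsMUMs.trace_tracelessPart_mul_tracelessPart (hP : IsMUMs d κ P) (b b' : Fin (d + 1))
    (n n' : Fin d) :
    ((P b n).tracelessPart * (P b' n').tracelessPart).trace =
      ((if b = b' then (κ * d - 1) / (d - 1) * (if n = n' then 1 else 0) +
          ((1 - κ) / (d - 1) - 1 / d) else 0 : ℝ) : ℂ) := by
  have hd := hP.two_le n.pos
  have hd1 : (d : ℂ) - 1 ≠ 0 := sub_ne_zero.mpr (by exact_mod_cast (by omega : d ≠ 1))
  obtain ⟨-, -, htr, hsq, hoff, hdiff, -⟩ := hP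
  rw [Matrix.trace_tracelessPart_mul_tracelessPart, htr, htr, Fintype.card_fin]
  rcases eq_or_ne b b' with rfl | hb
  · rcases eq_or_ne n n' with rfl | hn
    · rw [hsq]
      simp only [if_true]
      push_cast
      field_simp
      ring
    · rw [hoff _ _ _ hn]
      simp only [if_true, if_neg hn]
      push_cast
      ring
  · rw [hdiff _ _ _ _ hb, if_neg hb]
    push_cast
    ring

theorem IsMUMs.trace_sum_smul_tracelessPart_mul (hP : IsMUMs d κ P)
    {a : Fin (d + 1) × Fin d → ℝ} (ha : ∀ b, ∑ n, a (b, n) = 0) (q' : Fin (d + 1) × Fin d) :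
    ((∑ q, ((a q / ((κ * d - 1) / (d - 1)) : ℝ) : ℂ) • (P q.1 q.2).tracelessPart) *
      (P q'.1 q'.2).tracelessPart).trace = a q' := by
  have hγ : (κ * d - 1) / (d - 1) ≠ 0 := by
    have := hP.one_lt_mul q'.2.pos
    have : (2 : ℝ) ≤ d := by exact_mod_cast hP.two_le q'.2.pos
    exact (div_pos (by linarith) (by linarith)).ne'
  simp only [Finset.sum_mul, smul_mul, trace_sum, trace_smul,
    hP.trace_tracelessPart_mul_tracelessPart, smul_eq_mul, ← Complex.ofReal_mul,
    ← Complex.ofReal_sum, Complex.ofReal_inj, Fintype.sum_prod_type]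
  -- the constant part of the Gram matrix drops out because `a` sums to zero over each basis
  simp only [mul_ite, mul_one, mul_zero, mul_add, Finset.sum_ite_irrel, Finset.sum_add_distrib,
    Finset.sum_ite_eq', Finset.mem_univ, if_true, ← Finset.sum_mul, ← Finset.sum_div, ha,
    zero_div, zero_mul, add_zero, Finset.sum_const_zero]
  exact div_mul_cancel₀ _ hγ

theorem IsMUMs.sum_sq_re_trace_mul_sub_le (hP : IsMUMs d κ P) {σ : Matrix (Fin d) (Fin d) ℂ}
    (hσ : IsDensityMatrix σ) :
    ∑ q : Fin (d + 1) × Fin d, ((P q.1 q.2 * σ).trace.re - 1 / d) ^ 2 ≤ (κ * d - 1) / d := by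
  have hd0 : 0 < d := Fin.pos_iff_nonempty.mpr hσ.nonempty
  have hdR : (2 : ℝ) ≤ d := by exact_mod_cast hP.two_le hd0
  have hd1 : (d : ℝ) - 1 ≠ 0 := by linarith
  have hκ := hP.one_lt_mul hd0
  set a := fun q : Fin (d + 1) × Fin d => (P q.1 q.2 * σ).trace.re - 1 / d
  set γ : ℝ := (κ * d - 1) / (d - 1)
  have hγ : 0 < γ := div_pos (by linarith) (by linarith)
  have ha : ∀ b, ∑ n, a (b, n) = 0 := fun b => by
    simp only [a, Finset.sum_sub_distrib, hP.sum_re_trace_mul hσ.2, Finset.sum_const,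
      Finset.card_univ, Fintype.card_fin, nsmul_eq_mul]
    field_simp
    ring
  have hσP : ∀ q, (σ.tracelessPart * (P q.1 q.2).tracelessPart).trace = a q := fun q => by
    rw [Matrix.trace_tracelessPart_mul_tracelessPart, hσ.2, hP.2.2.1, trace_mul_comm,
      (hP.1 _ _).1.trace_mul_eq_ofReal_re hσ.1.1, Fintype.card_fin]
    push_cast [a]
    ring
  have hbessel := hσ.1.1.tracelessPart.sum_mul_re_trace_mul_le
    (fun q => (hP.1 q.1 q.2).1.tracelessPart) (fun q => a q / γ)
    fun q' => (hP.trace_sum_smul_tracelessPart_mul ha q').trans (hσP q').symm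
  have hσσ : (σ.tracelessPart * σ.tracelessPart).trace.re = (σ * σ).trace.re - 1 / d := by
    rw [Matrix.trace_tracelessPart_mul_tracelessPart, hσ.2, Fintype.card_fin]
    simp
  have hsum : ∑ q, a q / γ * a q = (∑ q, a q ^ 2) / γ := by
    rw [Finset.sum_div]
    exact Finset.sum_congr rfl fun q _ => by ring
  simp only [hσP, Complex.ofReal_re, hσσ, hsum, div_le_iff₀ hγ] at hbessel
  calc ∑ q, a q ^ 2 ≤ γ * (1 - 1 / d) := by nlinarith [hσ.re_trace_mul_self_le_one]
    _ = (κ * d - 1) / d := by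
        simp only [γ]
        field_simp

theorem IsMUMs.sum_sq_re_trace_mul_le (hP : IsMUMs d κ P) {σ : Matrix (Fin d) (Fin d) ℂ}
    (hσ : IsDensityMatrix σ) :
    ∑ q : Fin (d + 1) × Fin d, (P q.1 q.2 * σ).trace.re ^ 2 ≤ κ + 1 := by
  have hd : (0 : ℝ) < d := by exact_mod_cast Fin.pos_iff_nonempty.mpr hσ.nonempty
  set t := fun q : Fin (d + 1) × Fin d => (P q.1 q.2 * σ).trace.re
  have hsum : ∑ q, t q = d + 1 := by
    simp [t, Fintype.sum_prod_type, hP.sum_re_trace_mul hσ.2]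
  have hsq : ∑ q, t q ^ 2 = ∑ q, (t q - 1 / d) ^ 2 + (d + 1) / d := by
    simp only [sub_sq, Finset.sum_add_distrib, Finset.sum_sub_distrib, ← Finset.sum_mul,
      ← Finset.mul_sum, hsum, Finset.sum_const, Finset.card_univ, Fintype.card_prod,
      Fintype.card_fin, nsmul_eq_mul]
    push_cast
    field_simp
    ring
  have := hP.sum_sq_re_trace_mul_sub_le hσ
  rw [hsq]
  calc _ ≤ (κ * d - 1) / d + (d + 1) / d := by gcongr
    _ = κ + 1 := by field_simp; ring

theorem IsMUMs.norm_toLp_trace_mul_le (hP : IsMUMs d κ P) {σ : Matrix (Fin d) (Fin d) ℂ}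
    (hσ : IsDensityMatrix σ) :
    ‖WithLp.toLp 2 fun q : Fin (d + 1) × Fin d => (P q.1 q.2 * σ).trace‖ ≤ √(κ + 1) := by
  rw [EuclideanSpace.norm_eq]
  refine Real.sqrt_le_sqrt ((Finset.sum_congr rfl fun q _ => ?_).trans_le
    (hP.sum_sq_re_trace_mul_le hσ))
  change ‖(P q.1 q.2 * σ).trace‖ ^ 2 = _
  rw [(hP.1 _ _).1.trace_mul_eq_ofReal_re hσ.1.1, Complex.norm_real, Complex.ofReal_re,
    Real.norm_eq_abs, sq_abs]

end MUM

theorem separability_criterion_MUM_correlation_general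
    (dA dB : ℕ) (κA κB : ℝ)
    (P : Fin (dA + 1) → Fin dA → Matrix (Fin dA) (Fin dA) ℂ)
    (Q : Fin (dB + 1) → Fin dB → Matrix (Fin dB) (Fin dB) ℂ)
    (hP : IsMUMs dA κA P) (hQ : IsMUMs dB κB Q)
    (ρ : Matrix (Fin dA × Fin dB) (Fin dA × Fin dB) ℂ)
    (hsep : SeparableState ρ) :
    traceNorm (Matrix.of fun (p : Fin (dA + 1) × Fin dA) (q : Fin (dB + 1) × Fin dB) =>
        ((P p.1 p.2 ⊗ₖ Q q.1 q.2) * ρ).trace) ≤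
    Real.sqrt (κA + 1) * Real.sqrt (κB + 1) := by
  obtain ⟨K, p, ρA, ρB, hp0, hp1, hρA, hρB, rfl⟩ := hsep
  set u := fun i (x : Fin (dA + 1) × Fin dA) => (P x.1 x.2 * ρA i).trace
  set w := fun i (y : Fin (dB + 1) × Fin dB) => (Q y.1 y.2 * ρB i).trace
  have hJ : (Matrix.of fun (x : Fin (dA + 1) × Fin dA) (y : Fin (dB + 1) × Fin dB) =>
      ((P x.1 x.2 ⊗ₖ Q y.1 y.2) * ∑ i, (p i : ℂ) • (ρA i ⊗ₖ ρB i)).trace) =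
      ∑ i, vecMulVec ((p i : ℂ) • u i) (w i) := by
    ext x y
    simp [u, w, vecMulVec_apply, Matrix.sum_apply, Matrix.mul_sum, trace_sum,
      ← mul_kronecker_mul, trace_kronecker]
  calc _ = traceNorm (∑ i, vecMulVec ((p i : ℂ) • u i) (w i)) := by rw [hJ]
    _ ≤ ∑ i, ‖WithLp.toLp 2 ((p i : ℂ) • u i)‖ * ‖WithLp.toLp 2 (w i)‖ :=
        traceNorm_sum_vecMulVec_le _ _
    _ ≤ ∑ i, p i * (√(κA + 1) * √(κB + 1)) := Finset.sum_le_sum fun i _ => by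
        rw [WithLp.toLp_smul, norm_smul, Complex.norm_real, Real.norm_of_nonneg (hp0 i), mul_assoc]
        exact mul_le_mul_of_nonneg_left (mul_le_mul (hP.norm_toLp_trace_mul_le (hρA i))
          (hQ.norm_toLp_trace_mul_le (hρB i)) (norm_nonneg _) (Real.sqrt_nonneg _)) (hp0 i)
    _ = √(κA + 1) * √(κB + 1) := by rw [← Finset.sum_mul, hp1, one_mul]

/-- for a separable bipartite state ρ_AB and complete sets of MUMs
with efficiency parameters κ_A, κ_B on the two subsystems, the matrix J(ρ_AB)
with entries tr((P^{(b_A)}_{n_A} ⊗ Q^{(b_B)}_{n_B}) ρ_AB) satisfies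
‖J(ρ_AB)‖_tr ≤ √(κ_A + 1) · √(κ_B + 1). -/
theorem separability_criterion_MUM_correlation
    (dA dB : ℕ) (κA κB : ℝ)
    (P : Fin (dA + 1) → Fin dA → Matrix (Fin dA) (Fin dA) ℂ)
    (Q : Fin (dB + 1) → Fin dB → Matrix (Fin dB) (Fin dB) ℂ)
    (hP : IsMUMs dA κA P) (hQ : IsMUMs dB κB Q)
    (ρ : Matrix (Fin dA × Fin dB) (Fin dA × Fin dB) ℂ)
    (hρ : IsDensityMatrix ρ) (hsep : SeparableState ρ) :
    traceNorm (Matrix.of fun (p : Fin (dA + 1) × Fin dA) (q : Fin (dB + 1) × Fin dB) =>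
        ((P p.1 p.2 ⊗ₖ Q q.1 q.2) * ρ).trace) ≤
    Real.sqrt (κA + 1) * Real.sqrt (κB + 1) :=
  separability_criterion_MUM_correlation_general dA dB κA κB P Q hP hQ ρ hsep
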